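/- With A absolutely C̃-convex and absorbent in a C̃-module G and P_A(u) := e^{-val_A(u)}, for every η > 0 the chain of inclusions {u ∈ G : P_A(u) < η} ⊆ [(ε^{-log η})_ε] A ⊆ {u ∈ G : P_A(u) ≤ η} holds. -/

import Mathlib

noncomputable section

open scoped Pointwise

set_option synthInstance.maxHeartbeats 1000000

/-- `|u ε| = O(ε^b)` as `ε → 0⁺` (nets indexed by `ε ∈ (0,1]`). -/
def IsO (u : ℝ → ℂ) (b : ℝ) : Prop :=
  ∃ C > 0, ∃ ε₀ > 0, ∀ ε : ℝ, 0 < ε → ε ≤ ε₀ → ‖u ε‖ ≤ C * ε ^ b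

def Moderate (u : ℝ → ℂ) : Prop := ∃ N : ℕ, IsO u (-(N : ℝ))

def Negligible (u : ℝ → ℂ) : Prop := ∀ q : ℕ, IsO u (q : ℝ)

lemma isO_mono {u : ℝ → ℂ} {b b' : ℝ} (h : IsO u b) (hb : b' ≤ b) : IsO u b' := by
  obtain ⟨C, hC, e, he, H⟩ := h
  refine ⟨C, hC, min e 1, lt_min he one_pos, fun ε hε hε' => ?_⟩
  have h1 : ε ≤ e := le_trans hε' (min_le_left _ _)
  have h2 : ε ≤ 1 := le_trans hε' (min_le_right _ _)
  refine le_trans (H ε hε h1) (mul_le_mul_of_nonneg_left ?_ (le_of_lt hC))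
  exact Real.rpow_le_rpow_of_exponent_ge hε h2 hb

/-- The subring `E_M ⊆ ℂ^{(0,1]}` of moderate nets. -/
def moderateSubring : Subring (ℝ → ℂ) where
  carrier := {u | Moderate u}
  zero_mem' := ⟨0, 1, one_pos, 1, one_pos, fun ε hε _ => by
    simp [Real.rpow_natCast]⟩
  one_mem' := ⟨0, 1, one_pos, 1, one_pos, fun ε hε _ => by
    simp [Real.rpow_zero]⟩
  neg_mem' := by
    rintro u ⟨N, C, hC, e, he, H⟩
    exact ⟨N, C, hC, e, he, fun ε hε hε' => by simpa using H ε hε hε'⟩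
  add_mem' := by
    rintro u v ⟨N, hN⟩ ⟨M, hM⟩
    have hl1 : (N : ℝ) ≤ ((max N M : ℕ) : ℝ) := by exact_mod_cast Nat.le_max_left N M
    have hl2 : (M : ℝ) ≤ ((max N M : ℕ) : ℝ) := by exact_mod_cast Nat.le_max_right N M
    obtain ⟨C1, hC1, e1, he1, H1⟩ := isO_mono hN (neg_le_neg hl1)
    obtain ⟨C2, hC2, e2, he2, H2⟩ := isO_mono hM (neg_le_neg hl2)
    refine ⟨max N M, C1 + C2, by positivity, min e1 e2, lt_min he1 he2, fun ε hε hε' => ?_⟩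
    calc ‖u ε + v ε‖ ≤ ‖u ε‖ + ‖v ε‖ :=
          norm_add_le _ _
      _ ≤ C1 * ε ^ (-((max N M : ℕ) : ℝ)) + C2 * ε ^ (-((max N M : ℕ) : ℝ)) :=
          add_le_add (H1 ε hε (le_trans hε' (min_le_left _ _)))
            (H2 ε hε (le_trans hε' (min_le_right _ _)))
      _ = (C1 + C2) * ε ^ (-((max N M : ℕ) : ℝ)) := by ring
  mul_mem' := by
    rintro u v ⟨N, C1, hC1, e1, he1, H1⟩ ⟨M, C2, hC2, e2, he2, H2⟩
    refine ⟨N + M, C1 * C2, by positivity, min e1 e2, lt_min he1 he2, fun ε hε hε' => ?_⟩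
    have h1 := H1 ε hε (le_trans hε' (min_le_left _ _))
    have h2 := H2 ε hε (le_trans hε' (min_le_right _ _))
    have hrw : ε ^ (-(((N + M : ℕ)) : ℝ)) = ε ^ (-(N : ℝ)) * ε ^ (-(M : ℝ)) := by
      rw [← Real.rpow_add hε]; push_cast; ring_nf
    calc ‖u ε * v ε‖ = ‖u ε‖ * ‖v ε‖ := norm_mul _ _
      _ ≤ (C1 * ε ^ (-(N : ℝ))) * (C2 * ε ^ (-(M : ℝ))) :=
          mul_le_mul h1 h2 (norm_nonneg _) (by positivity)
      _ = C1 * C2 * ε ^ (-(((N + M : ℕ)) : ℝ)) := by rw [hrw]; ring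

/-- The ideal `N ⊆ E_M` of negligible nets. -/
def negligibleIdeal : Ideal moderateSubring where
  carrier := {u | Negligible u.val}
  zero_mem' := fun q => ⟨1, one_pos, 1, one_pos, fun ε hε _ => by
    simpa using by positivity⟩
  add_mem' := by
    rintro u v hu hv q
    obtain ⟨C1, hC1, e1, he1, H1⟩ := hu q
    obtain ⟨C2, hC2, e2, he2, H2⟩ := hv q
    refine ⟨C1 + C2, by positivity, min e1 e2, lt_min he1 he2, fun ε hε hε' => ?_⟩
    calc ‖u.val ε + v.val ε‖
        ≤ ‖u.val ε‖ + ‖v.val ε‖ := norm_add_le _ _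
      _ ≤ C1 * ε ^ (q : ℝ) + C2 * ε ^ (q : ℝ) :=
          add_le_add (H1 ε hε (le_trans hε' (min_le_left _ _)))
            (H2 ε hε (le_trans hε' (min_le_right _ _)))
      _ = (C1 + C2) * ε ^ (q : ℝ) := by ring
  smul_mem' := by
    rintro c u hu q
    obtain ⟨N, C1, hC1, e1, he1, H1⟩ := c.2
    obtain ⟨C2, hC2, e2, he2, H2⟩ := hu (q + N)
    refine ⟨C1 * C2, by positivity, min e1 e2, lt_min he1 he2, fun ε hε hε' => ?_⟩
    have h1 := H1 ε hε (le_trans hε' (min_le_left _ _))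
    have h2 := H2 ε hε (le_trans hε' (min_le_right _ _))
    have hrw : ε ^ (-(N : ℝ)) * ε ^ (((q + N : ℕ)) : ℝ) = ε ^ (q : ℝ) := by
      rw [← Real.rpow_add hε]; push_cast; ring_nf
    calc ‖(c • u).val ε‖
        = ‖c.val ε‖ * ‖u.val ε‖ := norm_mul _ _
      _ ≤ (C1 * ε ^ (-(N : ℝ))) * (C2 * ε ^ (((q + N : ℕ)) : ℝ)) :=
          mul_le_mul h1 h2 (norm_nonneg _) (by positivity)
      _ = C1 * C2 * (ε ^ (-(N : ℝ)) * ε ^ (((q + N : ℕ)) : ℝ)) := by ring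
      _ = C1 * C2 * ε ^ (q : ℝ) := by rw [hrw]

/-- The ring `C̃ = E_M / N` of Colombeau generalized complex numbers. -/
abbrev Ctilde : Type := ↥moderateSubring ⧸ negligibleIdeal

/-- The valuation on `C̃`, computed on a representative. -/
def valC (x : Ctilde) : EReal :=
  sSup ((fun b : ℝ => (b : EReal)) '' {b | IsO (Quotient.out x).val b})

/-- The ultra-pseudo-norm `|λ|ₑ = e^{-val(λ)}` on `C̃` (with `e^{-∞} := 0`). -/
def normEC (x : Ctilde) : ℝ :=
  if valC x = ⊤ then 0 else Real.exp (-(valC x).toReal)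

lemma epsPow_moderate (b : ℝ) : Moderate (fun ε => ((ε ^ b : ℝ) : ℂ)) := by
  refine ⟨⌈-b⌉₊, 1, one_pos, 1, one_pos, fun ε hε hε' => ?_⟩
  have hb : -((⌈-b⌉₊ : ℝ)) ≤ b := by
    have := Nat.le_ceil (-b); linarith
  have : ‖((ε ^ b : ℝ) : ℂ)‖ = ε ^ b := by
    rw [Complex.norm_real, Real.norm_eq_abs, abs_of_nonneg (Real.rpow_nonneg (le_of_lt hε) b)]
  rw [this, one_mul]
  exact Real.rpow_le_rpow_of_exponent_ge hε hε' hb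

/-- The generalized number `[(ε^b)_ε] ∈ C̃`. -/
def epsPow (b : ℝ) : Ctilde :=
  Ideal.Quotient.mk negligibleIdeal ⟨fun ε => ((ε ^ b : ℝ) : ℂ), epsPow_moderate b⟩

section Module

variable {G : Type*} [AddCommGroup G] [Module Ctilde G]

/-- `A` is `C̃`-absorbent. -/
def CAbsorbent (A : Set G) : Prop :=
  ∀ u : G, ∃ a : ℝ, ∀ b : ℝ, b ≤ a → u ∈ epsPow b • A

/-- `A` is `C̃`-balanced. -/
def CBalanced (A : Set G) : Prop :=
  ∀ lam : Ctilde, normEC lam ≤ 1 → lam • A ⊆ A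

/-- `A` is `C̃`-convex. -/
def CConvex (A : Set G) : Prop :=
  A + A ⊆ A ∧ ∀ b : ℝ, 0 ≤ b → epsPow b • A ⊆ A

/-- The Minkowski valuation `val_A(u) = sup {b : u ∈ [(ε^b)_ε] A}`. -/
def valA (A : Set G) (u : G) : EReal :=
  sSup ((fun b : ℝ => (b : EReal)) '' {b | u ∈ epsPow b • A})

/-- The gauge `P_A(u) = e^{-val_A(u)}`. -/
def gaugeA (A : Set G) (u : G) : ℝ :=
  if valA A u = ⊤ then 0 else Real.exp (-(valA A u).toReal)

end Module

/-! The sets `[(ε^b)_ε] A` shrink as `b` grows (by convexity), so `val_A(u)` is the threshold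
below which `u` lies in them; `P_A = e^{-val_A}` turns both inclusions into comparisons of
`-log η` with `val_A(u)`, absorbency excluding `val_A(u) = -∞`. -/

theorem epsPow_add (b c : ℝ) : epsPow (b + c) = epsPow b * epsPow c := by
  rw [epsPow, epsPow, epsPow, ← map_mul, Ideal.Quotient.eq]
  intro q
  refine ⟨1, one_pos, 1, one_pos, fun ε hε _ => ?_⟩
  have hzero : ((ε ^ (b + c) : ℝ) : ℂ) - ((ε ^ b : ℝ) : ℂ) * ((ε ^ c : ℝ) : ℂ) = 0 := by
    rw [← Complex.ofReal_mul, ← Real.rpow_add hε, sub_self]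
  change ‖((ε ^ (b + c) : ℝ) : ℂ) - ((ε ^ b : ℝ) : ℂ) * ((ε ^ c : ℝ) : ℂ)‖ ≤ 1 * ε ^ (q : ℝ)
  rw [hzero, norm_zero, one_mul]
  positivity

section Module

variable {G : Type*} [AddCommGroup G] [Module Ctilde G] {A : Set G} {u : G}

theorem CConvex.epsPow_smul_subset_of_le (hconv : CConvex A) {b b' : ℝ} (h : b' ≤ b) :
    epsPow b • A ⊆ epsPow b' • A := by
  rw [show b = b' + (b - b') by ring, epsPow_add, mul_smul]
  exact Set.smul_set_mono (hconv.2 (b - b') (sub_nonneg.mpr h))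

theorem le_valA_of_mem {b : ℝ} (h : u ∈ epsPow b • A) : (b : EReal) ≤ valA A u :=
  le_sSup ⟨b, h, rfl⟩

theorem CAbsorbent.valA_ne_bot (habs : CAbsorbent A) (u : G) : valA A u ≠ ⊥ := by
  obtain ⟨a, ha⟩ := habs u
  exact ne_bot_of_le_ne_bot (EReal.coe_ne_bot a) (le_valA_of_mem (ha a le_rfl))

theorem CConvex.mem_of_lt_valA (hconv : CConvex A) {b : ℝ} (h : (b : EReal) < valA A u) :
    u ∈ epsPow b • A := by
  obtain ⟨_, ⟨c, hc, rfl⟩, hbc⟩ := lt_sSup_iff.mp h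
  exact hconv.epsPow_smul_subset_of_le (EReal.coe_lt_coe_iff.mp hbc).le hc

theorem gaugeA_of_valA_eq_coe {r : ℝ} (h : valA A u = r) : gaugeA A u = Real.exp (-r) := by
  simp [gaugeA, h]

theorem gaugeA_le_of_le_valA {b : ℝ} (h : (b : EReal) ≤ valA A u) :
    gaugeA A u ≤ Real.exp (-b) := by
  induction hv : valA A u using EReal.rec with
  | bot => simp [hv] at h
  | top => simp [gaugeA, hv, Real.exp_nonneg]
  | coe r =>
    rw [gaugeA_of_valA_eq_coe hv, Real.exp_le_exp, neg_le_neg_iff]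
    exact_mod_cast hv ▸ h

theorem lt_valA_of_gaugeA_lt (hbot : valA A u ≠ ⊥) {b : ℝ}
    (h : gaugeA A u < Real.exp (-b)) : (b : EReal) < valA A u := by
  induction hv : valA A u using EReal.rec with
  | bot => exact absurd hv hbot
  | top => exact EReal.coe_lt_top b
  | coe r =>
    rw [gaugeA_of_valA_eq_coe hv, Real.exp_lt_exp, neg_lt_neg_iff] at h
    exact_mod_cast h

end Module

theorem gaugeA_chain_general {G : Type*} [AddCommGroup G] [Module Ctilde G]
    (A : Set G) (hconv : CConvex A) (habs : CAbsorbent A)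
    (η : ℝ) (hη : 0 < η) :
    {u : G | gaugeA A u < η} ⊆ epsPow (-Real.log η) • A ∧
    epsPow (-Real.log η) • A ⊆ {u : G | gaugeA A u ≤ η} := by
  have hη' : Real.exp (-(-Real.log η)) = η := by rw [neg_neg, Real.exp_log hη]
  refine ⟨fun u hu => ?_, fun u hu => ?_⟩
  · rw [← hη'] at hu
    exact hconv.mem_of_lt_valA (lt_valA_of_gaugeA_lt (habs.valA_ne_bot u) hu)
  · rw [← hη']
    exact gaugeA_le_of_le_valA (le_valA_of_mem hu)

/-- for an absolutely `C̃`-convex absorbent subset `A` of a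
`C̃`-module `G` and `P_A(u) = e^{-val_A(u)}`, for every `η > 0` one has
`{P_A < η} ⊆ [(ε^{-log η})_ε] A ⊆ {P_A ≤ η}`. -/
theorem gaugeA_chain {G : Type*} [AddCommGroup G] [Module Ctilde G]
    (A : Set G) (hbal : CBalanced A) (hconv : CConvex A) (habs : CAbsorbent A)
    (η : ℝ) (hη : 0 < η) :
    {u : G | gaugeA A u < η} ⊆ epsPow (-Real.log η) • A ∧
    epsPow (-Real.log η) • A ⊆ {u : G | gaugeA A u ≤ η} :=
  gaugeA_chain_general A hconv habs η hη
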